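/- Let A ⊆ S_n be a subgroup of the symmetric group, identified with a set of n×n permutation matrices in ℝ^{n×n}. If A is permutation summable, then the vanishing ideal I_A of A (as a finite subset of ℝ^{n×n}) is TH₁-exact. -/

import Mathlib

open MvPolynomial

/-- A polynomial `h` is `k`-sos mod a set `I` of polynomials if
`h - ∑ gᵢ² ∈ I` for some polynomials `gᵢ` of degree at most `k`. -/
def IsKSos {σ : Type*} (I : Set (MvPolynomial σ ℝ)) (k : ℕ) (h : MvPolynomial σ ℝ) : Prop :=
  ∃ (r : ℕ) (g : Fin r → MvPolynomial σ ℝ),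
    (∀ i, (g i).totalDegree ≤ k) ∧ h - ∑ i, g i ^ 2 ∈ I

/-- The `k`-th theta body of `I`: the points where every linear polynomial that is
`k`-sos mod `I` is nonnegative. -/
def thetaBody {σ : Type*} (I : Set (MvPolynomial σ ℝ)) (k : ℕ) : Set (σ → ℝ) :=
  {p | ∀ l : MvPolynomial σ ℝ, l.totalDegree ≤ 1 → IsKSos I k l → 0 ≤ eval p l}

/-- The real variety of a set of polynomials. -/
def realVariety {σ : Type*} (I : Set (MvPolynomial σ ℝ)) : Set (σ → ℝ) :=
  {x | ∀ f ∈ I, eval x f = 0}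

/-- The real radical of a set of polynomials:
all `f` with `f^(2m) + ∑ gᵢ² ∈ I` for some `m` and some `gᵢ`. -/
def realRadical {σ : Type*} (I : Set (MvPolynomial σ ℝ)) : Set (MvPolynomial σ ℝ) :=
  {f | ∃ (m r : ℕ) (g : Fin r → MvPolynomial σ ℝ), f ^ (2 * m) + ∑ i, g i ^ 2 ∈ I}

/-- The permutation matrix of `σ ∈ S_n`, viewed as a point of `ℝ^{n×n}`. -/
def permMat {n : ℕ} (σ : Equiv.Perm (Fin n)) : Fin n × Fin n → ℝ :=
  fun p => if σ p.2 = p.1 then 1 else 0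

/-- A subgroup `A ⊆ S_n` is permutation summable if whenever `P₁, …, P_m ∈ A` are such that all
entries of `P₁ + ⋯ + P_m - Id` are nonnegative, this matrix is a sum of matrices in `A`. -/
def PermutationSummable {n : ℕ} (A : Subgroup (Equiv.Perm (Fin n))) : Prop :=
  ∀ (m : ℕ) (P : Fin m → A),
    (∀ p : Fin n × Fin n, 0 ≤ ∑ i, permMat (P i : Equiv.Perm (Fin n)) p - permMat 1 p) →
    ∃ (r : ℕ) (Q : Fin r → A),
      (fun p => ∑ i, permMat (P i : Equiv.Perm (Fin n)) p - permMat 1 p) =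
        fun p => ∑ j, permMat (Q j : Equiv.Perm (Fin n)) p

/-!
A point `x` of `TH₁(I_A)` satisfies every affine equation that holds on `A`, and `xₚ ≥ 0` for
every entry, because `xₚ - xₚ²` vanishes on permutation matrices. So `x` is a nonnegative matrix
in the span of `A` with column sums `1`. Writing `x = ∑ ασ σ`, the integer combinations
`∑ ⌈k ασ⌉ σ` are entrywise nonnegative, so by permutation summability (once for each negative
coefficient) they are sums of matrices of `A`; rescaled, they are points of `conv A`
converging to `x`. The reverse inclusion holds for every ideal, since a theta body is closed,
convex and contains the real variety.
-/

open Equiv Filter Topology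

section ThetaBody

variable {ι : Type*}

lemma Finsupp.eq_zero_or_eq_single_one {m : ι →₀ ℕ} (hm : (m.sum fun _ e => e) ≤ 1) :
    m = 0 ∨ ∃ i, m = Finsupp.single i 1 := by
  classical
  have hcard : Multiset.card (Finsupp.toMultiset m) ≤ 1 := by rwa [Finsupp.card_toMultiset]
  rw [← Finsupp.toMultiset_toFinsupp m]
  rcases Nat.le_one_iff_eq_zero_or_eq_one.mp hcard with h | h
  · left
    rw [Multiset.card_eq_zero.mp h, Multiset.toFinsupp_zero]
  · obtain ⟨i, hi⟩ := Multiset.card_eq_one.mp h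
    exact Or.inr ⟨i, by rw [hi, Multiset.toFinsupp_singleton]⟩

lemma MvPolynomial.eval_smul_add_smul_of_totalDegree_le_one {l : MvPolynomial ι ℝ}
    (hl : l.totalDegree ≤ 1) (x y : ι → ℝ) {a b : ℝ} (hab : a + b = 1) :
    eval (a • x + b • y) l = a * eval x l + b * eval y l := by
  simp only [eval_eq, Finset.mul_sum, ← Finset.sum_add_distrib]
  refine Finset.sum_congr rfl fun m hm => ?_
  rcases Finsupp.eq_zero_or_eq_single_one ((le_totalDegree hm).trans hl) with rfl | ⟨i, rfl⟩
  · simp only [Finsupp.support_zero, Finset.prod_empty]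
    linear_combination -(coeff 0 l) * hab
  · simp only [Finsupp.support_single i one_ne_zero, Finset.prod_singleton,
      Finsupp.single_eq_same, pow_one, Pi.add_apply, Pi.smul_apply, smul_eq_mul]
    ring

variable {I : Set (MvPolynomial ι ℝ)} {k : ℕ}

lemma isKSos_of_mem {l : MvPolynomial ι ℝ} (hl : l ∈ I) : IsKSos I k l :=
  ⟨0, Fin.elim0, Fin.rec0, by simpa using hl⟩

lemma isKSos_of_sub_sq_mem {l g : MvPolynomial ι ℝ} (hg : g.totalDegree ≤ k)
    (h : l - g ^ 2 ∈ I) : IsKSos I k l :=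
  ⟨1, fun _ => g, fun _ => hg, by simpa using h⟩

lemma IsKSos.eval_nonneg {l : MvPolynomial ι ℝ} (hl : IsKSos I k l) {x : ι → ℝ}
    (hx : x ∈ realVariety I) : 0 ≤ eval x l := by
  obtain ⟨r, g, -, hg⟩ := hl
  have h := hx _ hg
  rw [map_sub, sub_eq_zero] at h
  rw [h, map_sum]
  exact Finset.sum_nonneg fun i _ => by rw [map_pow]; positivity

lemma realVariety_subset_thetaBody : realVariety I ⊆ thetaBody I k :=
  fun _ hx _ _ hl => hl.eval_nonneg hx

lemma convex_thetaBody : Convex ℝ (thetaBody I k) := by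
  intro x hx y hy a b ha hb hab l hdeg hl
  rw [eval_smul_add_smul_of_totalDegree_le_one hdeg x y hab]
  exact add_nonneg (mul_nonneg ha (hx l hdeg hl)) (mul_nonneg hb (hy l hdeg hl))

lemma isClosed_thetaBody : IsClosed (thetaBody I k) := by
  simp only [thetaBody, Set.ofPred_forall]
  exact isClosed_iInter fun l => isClosed_iInter fun _ => isClosed_iInter fun _ =>
    isClosed_le continuous_const (continuous_eval l)

lemma closure_convexHull_realVariety_subset_thetaBody :
    closure (convexHull ℝ (realVariety I)) ⊆ thetaBody I k :=
  closure_minimal (convexHull_min realVariety_subset_thetaBody convex_thetaBody)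
    isClosed_thetaBody

lemma eval_eq_zero_of_mem_thetaBody {J : Ideal (MvPolynomial ι ℝ)} {x : ι → ℝ}
    (hx : x ∈ thetaBody (J : Set (MvPolynomial ι ℝ)) k) {l : MvPolynomial ι ℝ}
    (hdeg : l.totalDegree ≤ 1) (hl : l ∈ J) : eval x l = 0 := by
  have h₁ := hx l hdeg (isKSos_of_mem hl)
  have h₂ := hx (-l) (by rwa [totalDegree_neg]) (isKSos_of_mem (J.neg_mem hl))
  rw [map_neg] at h₂
  linarith

end ThetaBody

section VanishingIdeal

variable {ι : Type*} {S : Set (ι → ℝ)} {k : ℕ} {x : ι → ℝ}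

lemma subset_realVariety_vanishingIdeal (S : Set (ι → ℝ)) :
    S ⊆ realVariety (vanishingIdeal ℝ S : Set (MvPolynomial ι ℝ)) :=
  fun y hy _ hf => by simpa using hf y hy

lemma apply_nonneg_of_mem_thetaBody_vanishingIdeal (hk : 1 ≤ k)
    (hx : x ∈ thetaBody (vanishingIdeal ℝ S : Set (MvPolynomial ι ℝ)) k) {i : ι}
    (hS : ∀ y ∈ S, y i ^ 2 = y i) : 0 ≤ x i := by
  have hsos : IsKSos (vanishingIdeal ℝ S : Set (MvPolynomial ι ℝ)) k (X i) :=
    isKSos_of_sub_sq_mem ((totalDegree_X i).trans_le hk) fun y hy => by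
      simp [hS y hy]
  simpa using hx (X i) (totalDegree_X i).le hsos

variable [Fintype ι]

noncomputable def linearPoly (f : Module.Dual ℝ (ι → ℝ)) : MvPolynomial ι ℝ :=
  ∑ i, C (f (Pi.basisFun ℝ ι i)) * X i

lemma eval_linearPoly (f : Module.Dual ℝ (ι → ℝ)) (y : ι → ℝ) : eval y (linearPoly f) = f y := by
  conv_rhs => rw [← (Pi.basisFun ℝ ι).sum_repr y]
  simp [linearPoly, mul_comm]

lemma totalDegree_linearPoly_le (f : Module.Dual ℝ (ι → ℝ)) : (linearPoly f).totalDegree ≤ 1 :=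
  (totalDegree_finsetSum _ _).trans <| Finset.sup_le fun i _ =>
    (totalDegree_mul _ _).trans <| by rw [totalDegree_C, totalDegree_X]

lemma apply_eq_of_mem_thetaBody_vanishingIdeal
    (hx : x ∈ thetaBody (vanishingIdeal ℝ S : Set (MvPolynomial ι ℝ)) k)
    (f : Module.Dual ℝ (ι → ℝ)) (c : ℝ) (hS : ∀ y ∈ S, f y = c) : f x = c := by
  have hdeg : (linearPoly f - C c).totalDegree ≤ 1 :=
    (totalDegree_sub _ _).trans (max_le (totalDegree_linearPoly_le f) (by simp))
  have hmem : linearPoly f - C c ∈ vanishingIdeal ℝ S := fun y hy => by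
    simp [eval_linearPoly, hS y hy]
  have := eval_eq_zero_of_mem_thetaBody hx hdeg hmem
  rwa [map_sub, eval_linearPoly, eval_C, sub_eq_zero] at this

lemma mem_span_of_mem_thetaBody_vanishingIdeal
    (hx : x ∈ thetaBody (vanishingIdeal ℝ S : Set (MvPolynomial ι ℝ)) k) :
    x ∈ Submodule.span ℝ S := by
  refine (Subspace.forall_mem_dualAnnihilator_apply_eq_zero_iff _ x).mp fun f hf => ?_
  exact apply_eq_of_mem_thetaBody_vanishingIdeal hx f 0 fun y hy =>
    (Submodule.mem_dualAnnihilator f).mp hf y (Submodule.subset_span hy)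

end VanishingIdeal

section PermutationMatrix

variable {n : ℕ}

lemma permMat_nonneg (σ : Perm (Fin n)) : 0 ≤ permMat σ := fun p => by
  unfold permMat; split <;> norm_num

lemma permMat_apply_sq (σ : Perm (Fin n)) (p : Fin n × Fin n) :
    permMat σ p ^ 2 = permMat σ p := by
  unfold permMat; split <;> norm_num

lemma permMat_mul_apply (σ ρ : Perm (Fin n)) (p : Fin n × Fin n) :
    permMat (σ * ρ) p = permMat σ (p.1, ρ p.2) :=
  rfl

noncomputable def colSum (j : Fin n) : Module.Dual ℝ (Fin n × Fin n → ℝ) :=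
  ∑ i, LinearMap.proj (i, j)

lemma colSum_apply (j : Fin n) (x : Fin n × Fin n → ℝ) : colSum j x = ∑ i, x (i, j) := by
  simp [colSum]

lemma colSum_permMat (j : Fin n) (σ : Perm (Fin n)) : colSum j (permMat σ) = 1 := by
  simp [colSum_apply, permMat]

variable {A : Subgroup (Perm (Fin n))}

lemma PermutationSummable.exists_sum_eq_sum_sub_one (hA : PermutationSummable A) {m : ℕ}
    (P : Fin m → A) (h : permMat 1 ≤ ∑ i, permMat (P i : Perm (Fin n))) :
    ∃ (r : ℕ) (Q : Fin r → A),
      ∑ i, permMat (P i : Perm (Fin n)) - permMat 1 = ∑ j, permMat (Q j : Perm (Fin n)) := by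
  obtain ⟨r, Q, hQ⟩ := hA m P fun p => by simpa [Finset.sum_apply] using h p
  exact ⟨r, Q, funext fun p => by simpa [Finset.sum_apply] using congrFun hQ p⟩

/-- Permutation summability extends from subtracting the identity to subtracting any sum of
matrices of `A`: subtract them one at a time, after shifting the columns so that the one being
removed becomes the identity. -/
lemma PermutationSummable.exists_sum_eq_sum_sub_sum (hA : PermutationSummable A) {m k : ℕ}
    (P : Fin m → A) (N : Fin k → A)
    (h : ∑ j, permMat (N j : Perm (Fin n)) ≤ ∑ i, permMat (P i : Perm (Fin n))) :
    ∃ (r : ℕ) (R : Fin r → A), ∑ i, permMat (P i : Perm (Fin n)) -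
      ∑ j, permMat (N j : Perm (Fin n)) = ∑ l, permMat (R l : Perm (Fin n)) := by
  induction k generalizing m with
  | zero => exact ⟨m, P, by simp⟩
  | succ k ih =>
    set τ : A := N 0
    rw [Fin.sum_univ_succ] at h ⊢
    have hτ : permMat (τ : Perm (Fin n)) ≤ ∑ i, permMat (P i : Perm (Fin n)) :=
      le_trans (le_add_of_nonneg_right (Finset.sum_nonneg fun j _ => permMat_nonneg _)) h
    obtain ⟨r, Q, hQ⟩ := hA.exists_sum_eq_sum_sub_one (fun i => P i * τ⁻¹) fun p => by
      have := hτ (p.1, (τ : Perm (Fin n))⁻¹ p.2)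
      rw [← permMat_mul_apply, mul_inv_cancel] at this
      simpa [Finset.sum_apply, permMat_mul_apply] using this
    have hQτ : ∑ j, permMat ((Q j * τ : A) : Perm (Fin n)) =
        ∑ i, permMat (P i : Perm (Fin n)) - permMat τ := funext fun p => by
      have := congrFun hQ (p.1, (τ : Perm (Fin n)) p.2)
      simp only [Finset.sum_apply, Pi.sub_apply, Subgroup.coe_mul, Subgroup.coe_inv] at this ⊢
      have hone : permMat 1 (p.1, (τ : Perm (Fin n)) p.2) = permMat τ p := by
        rw [← permMat_mul_apply, one_mul]
      simp only [permMat_mul_apply, hone] at this ⊢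
      simp [← this]
    obtain ⟨r', R, hR⟩ := ih (fun j => Q j * τ) (fun j => N j.succ) <| by
      rw [hQτ]
      exact le_sub_iff_add_le'.mpr h
    exact ⟨r', R, by rw [← hR, hQτ, sub_add_eq_sub_sub]⟩

end PermutationMatrix

lemma exists_fin_sum_eq_sum_nsmul {α M : Type*} [Fintype α] [AddCommMonoid M] (f : α → M)
    (c : α → ℕ) : ∃ (m : ℕ) (P : Fin m → α), ∑ i, f (P i) = ∑ a, c a • f a := by
  let e := Fintype.equivFin (Σ a, Fin (c a))
  refine ⟨_, fun i => (e.symm i).1, ?_⟩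
  rw [e.symm.sum_comp (fun s => f s.1), Fintype.sum_sigma]
  simp

lemma tendsto_intCeil_mul_div_atTop (a : ℝ) :
    Tendsto (fun k : ℕ => (⌈k * a⌉ : ℝ) / k) atTop (𝓝 a) := by
  have hupper : Tendsto (fun k : ℕ => a + 1 / (k : ℝ)) atTop (𝓝 a) := by
    simpa using (tendsto_const_nhds (x := a)).add tendsto_one_div_atTop_nhds_zero_nat
  refine tendsto_of_tendsto_of_tendsto_of_le_of_le' tendsto_const_nhds hupper ?_ ?_
  · filter_upwards [eventually_gt_atTop 0] with k hk
    rw [le_div_iff₀ (Nat.cast_pos.mpr hk)]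
    linarith [Int.le_ceil ((k : ℝ) * a)]
  · filter_upwards [eventually_gt_atTop 0] with k hk
    have hk' : (0 : ℝ) < k := Nat.cast_pos.mpr hk
    rw [div_le_iff₀ hk', add_mul, one_div_mul_cancel hk'.ne']
    linarith [Int.ceil_lt_add_one ((k : ℝ) * a)]

section ConvexHull

variable {n : ℕ} {A : Subgroup (Perm (Fin n))} [Fintype A]

lemma PermutationSummable.centerMass_intCast_mem_convexHull (hA : PermutationSummable A)
    (j : Fin n) (b : A → ℤ) (hb : 0 ≤ ∑ σ, (b σ : ℝ) • permMat (σ : Perm (Fin n)))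
    (hpos : 0 < ∑ σ, (b σ : ℝ)) :
    Finset.univ.centerMass (fun σ => (b σ : ℝ)) (fun σ : A => permMat (σ : Perm (Fin n))) ∈
      convexHull ℝ (Set.range fun σ : A => permMat (σ : Perm (Fin n))) := by
  obtain ⟨m, P, hP⟩ :=
    exists_fin_sum_eq_sum_nsmul (fun σ : A => permMat (σ : Perm (Fin n))) fun σ => (b σ).toNat
  obtain ⟨k, N, hN⟩ :=
    exists_fin_sum_eq_sum_nsmul (fun σ : A => permMat (σ : Perm (Fin n))) fun σ => (-b σ).toNat
  have hsplit : ∑ σ, (b σ : ℝ) • permMat (σ : Perm (Fin n)) =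
      ∑ i, permMat (P i : Perm (Fin n)) - ∑ i, permMat (N i : Perm (Fin n)) := by
    rw [hP, hN, ← Finset.sum_sub_distrib]
    refine Finset.sum_congr rfl fun σ _ => ?_
    conv_lhs => rw [← (b σ).toNat_sub_toNat_neg]
    rw [Int.cast_sub, sub_smul, Int.cast_natCast, Int.cast_natCast, Nat.cast_smul_eq_nsmul,
      Nat.cast_smul_eq_nsmul]
  obtain ⟨r, R, hR⟩ := hA.exists_sum_eq_sum_sub_sum P N (sub_nonneg.mp (hsplit ▸ hb))
  have hr : ∑ σ, (b σ : ℝ) = r := by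
    simpa [map_sum, colSum_permMat] using congrArg (colSum j) (hsplit.trans hR)
  have hmem := Finset.univ.centerMass_mem_convexHull (w := fun _ => (1 : ℝ))
    (z := fun l => permMat (R l : Perm (Fin n)))
    (s := Set.range fun σ : A => permMat (σ : Perm (Fin n))) (fun _ _ => zero_le_one)
    (by simpa [← hr] using hpos) (fun l _ => ⟨R l, rfl⟩)
  rw [Finset.centerMass, hsplit, hR, hr]
  simpa [Finset.centerMass] using hmem

theorem PermutationSummable.mem_convexHull_of_mem_span (hA : PermutationSummable A) (j : Fin n)
    {x : Fin n × Fin n → ℝ}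
    (hspan : x ∈ Submodule.span ℝ (Set.range fun σ : A => permMat (σ : Perm (Fin n))))
    (hx : 0 ≤ x) (hcol : colSum j x = 1) :
    x ∈ convexHull ℝ (Set.range fun σ : A => permMat (σ : Perm (Fin n))) := by
  obtain ⟨α, rfl⟩ := (Submodule.mem_span_range_iff_exists_fun ℝ).mp hspan
  have hα : ∑ σ, α σ = 1 := by simpa [map_sum, colSum_permMat] using hcol
  set β : ℕ → A → ℝ := fun k σ => (⌈k * α σ⌉ : ℝ) / k
  have hlim : Tendsto
      (fun k => Finset.univ.centerMass (β k) fun σ : A => permMat (σ : Perm (Fin n))) atTop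
      (𝓝 (∑ σ, α σ • permMat (σ : Perm (Fin n)))) := by
    have hβ (σ : A) : Tendsto (fun k => β k σ) atTop (𝓝 (α σ)) :=
      tendsto_intCeil_mul_div_atTop (α σ)
    have := ((tendsto_finsetSum Finset.univ fun σ _ => hβ σ).inv₀ (by simp [hα])).smul
      (tendsto_finsetSum Finset.univ fun σ _ => (hβ σ).smul_const (permMat (σ : Perm (Fin n))))
    simpa [Finset.centerMass, hα] using this
  refine ((Set.finite_range _).isClosed_convexHull (𝕜 := ℝ)).mem_of_tendsto hlim ?_
  filter_upwards [eventually_gt_atTop 0] with k hk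
  have hk' : (0 : ℝ) < k := Nat.cast_pos.mpr hk
  have hβk : β k = (k : ℝ)⁻¹ • fun σ => (⌈k * α σ⌉ : ℝ) := by
    ext σ
    simp [β, div_eq_inv_mul]
  rw [hβk, Finset.univ.centerMass_smul_left _ (inv_ne_zero hk'.ne')]
  refine hA.centerMass_intCast_mem_convexHull j _ ?_ ?_
  · calc 0 ≤ (k : ℝ) • ∑ σ, α σ • permMat (σ : Perm (Fin n)) := smul_nonneg hk'.le hx
      _ = ∑ σ, ((k : ℝ) * α σ) • permMat (σ : Perm (Fin n)) := by
        simp only [Finset.smul_sum, smul_smul]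
      _ ≤ ∑ σ, (⌈(k : ℝ) * α σ⌉ : ℝ) • permMat (σ : Perm (Fin n)) :=
        Finset.sum_le_sum fun σ _ =>
          smul_le_smul_of_nonneg_right (Int.le_ceil _) (permMat_nonneg _)
  · calc (0 : ℝ) < k * ∑ σ, α σ := by rw [hα, mul_one]; exact hk'
      _ = ∑ σ, (k : ℝ) * α σ := Finset.mul_sum _ _ _
      _ ≤ ∑ σ, (⌈(k : ℝ) * α σ⌉ : ℝ) := Finset.sum_le_sum fun σ _ => Int.le_ceil _

end ConvexHull

section PermutationSummable

variable {n : ℕ} {A : Subgroup (Perm (Fin n))}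

lemma setOf_permMat_eq_range (A : Subgroup (Perm (Fin n))) :
    {x : Fin n × Fin n → ℝ | ∃ σ ∈ A, x = permMat σ} =
      Set.range fun σ : A => permMat (σ : Perm (Fin n)) := by
  ext x
  constructor
  · rintro ⟨σ, hσ, rfl⟩
    exact ⟨⟨σ, hσ⟩, rfl⟩
  · rintro ⟨σ, rfl⟩
    exact ⟨σ, σ.2, rfl⟩

theorem PermutationSummable.thetaBody_subset_convexHull (hA : PermutationSummable A) :
    thetaBody ((vanishingIdeal ℝ {x : Fin n × Fin n → ℝ | ∃ σ ∈ A, x = permMat σ} :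
        Ideal (MvPolynomial (Fin n × Fin n) ℝ)) : Set (MvPolynomial (Fin n × Fin n) ℝ)) 1 ⊆
      convexHull ℝ {x : Fin n × Fin n → ℝ | ∃ σ ∈ A, x = permMat σ} := by
  classical
  intro x hx
  rw [setOf_permMat_eq_range] at hx ⊢
  rcases isEmpty_or_nonempty (Fin n) with hn | hn
  · exact subset_convexHull ℝ _ ⟨1, Subsingleton.elim _ _⟩
  obtain ⟨j⟩ := hn
  refine hA.mem_convexHull_of_mem_span j (mem_span_of_mem_thetaBody_vanishingIdeal hx)
    (fun p => apply_nonneg_of_mem_thetaBody_vanishingIdeal le_rfl hx ?_)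
    (apply_eq_of_mem_thetaBody_vanishingIdeal hx (colSum j) 1 ?_)
  · rintro _ ⟨σ, rfl⟩
    exact permMat_apply_sq _ p
  · rintro _ ⟨σ, rfl⟩
    exact colSum_permMat j _

end PermutationSummable

/-- If `A ⊆ S_n` is permutation summable, then the vanishing ideal `I_A` of
the set of permutation matrices of `A` is `TH₁`-exact. -/
theorem permutation_summable_thOneExact {n : ℕ} (A : Subgroup (Equiv.Perm (Fin n)))
    (hA : PermutationSummable A) :
    thetaBody ((vanishingIdeal ℝ {x : Fin n × Fin n → ℝ | ∃ σ ∈ A, x = permMat σ} :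
        Ideal (MvPolynomial (Fin n × Fin n) ℝ)) : Set (MvPolynomial (Fin n × Fin n) ℝ)) 1 =
      closure (convexHull ℝ (realVariety
        ((vanishingIdeal ℝ {x : Fin n × Fin n → ℝ | ∃ σ ∈ A, x = permMat σ} :
          Ideal (MvPolynomial (Fin n × Fin n) ℝ)) : Set (MvPolynomial (Fin n × Fin n) ℝ)))) :=
  (hA.thetaBody_subset_convexHull.trans <|
      (convexHull_mono (subset_realVariety_vanishingIdeal _)).trans subset_closure).antisymm
    closure_convexHull_realVariety_subset_thetaBody
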